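/- Let (P,≻,q) be a problem and k > 1. Every manipulating student of the constrained Gale-Shapley mechanism GS^k at (P,≻,q) is a blocking student for the matching GS^k(P,≻,q) under (P,≻,q). -/

import Mathlib

/-!
School choice framework following Bonkoungou–Nesterov,
"Reforms meet fairness concerns in school and college admissions".

Students `I` and schools `S` are finite types with `|I| > |S|`.
A strict preference relation of a student over `S ∪ {∅}` is represented by a list
of `Option S` containing every element exactly once (earlier = more preferred);
`none` is the outside option.  A strict priority order of a school is a list of
`I` containing every student exactly once (earlier = higher priority).
-/

namespace SchoolChoice

variable {I S : Type*} [Fintype I] [DecidableEq I] [Fintype S] [DecidableEq S]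

/-- `p` is a strict preference relation on `S ∪ {∅}`: a ranking list containing every
element of `Option S` exactly once. -/
def ValidPref (p : List (Option S)) : Prop := p.Nodup ∧ ∀ x : Option S, x ∈ p

/-- `pr` is a strict priority order: a ranking list containing every student exactly once. -/
def ValidPrio (pr : List I) : Prop := pr.Nodup ∧ ∀ i : I, i ∈ pr

/-- `a` is strictly preferred to `b` under the preference relation `p`. -/
def prefLt (p : List (Option S)) (a b : Option S) : Prop := p.idxOf a < p.idxOf b

/-- `i` has strictly higher priority than `j` under the priority order `pr`. -/
def prioLt (pr : List I) (i j : I) : Prop := pr.idxOf i < pr.idxOf j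

instance (p : List (Option S)) (a b : Option S) : Decidable (prefLt p a b) :=
  inferInstanceAs (Decidable (_ < _))

instance (pr : List I) (i j : I) : Decidable (prioLt pr i j) :=
  inferInstanceAs (Decidable (_ < _))

/-- The acceptable schools of `p` (those preferred to the outside option), in preference
order. -/
def acceptables (p : List (Option S)) : List S := (p.takeWhile Option.isSome).filterMap id

/-- The truncation of `p` after its `k`-th acceptable school: the preference relation
listing, in the same order, only the `min k _` most-preferred acceptable schools of `p`,
all other schools being unacceptable (kept below `none` in their original order). -/
def truncate (p : List (Option S)) (k : ℕ) : List (Option S) :=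
  ((acceptables p).take k).map some ++
    none :: p.filter (fun x => decide (x ≠ none ∧ x ∉ ((acceptables p).take k).map some))

/-- `μ` is a matching: it respects the capacities `q`. -/
def IsMatching (q : S → ℕ) (μ : I → Option S) : Prop :=
  ∀ s : S, (Finset.univ.filter (fun i => μ i = some s)).card ≤ q s

/-- The pair `(i, s)` blocks `μ` under the problem `(P, prio, q)`. -/
def Blocks (P : I → List (Option S)) (prio : S → List I) (q : S → ℕ)
    (μ : I → Option S) (i : I) (s : S) : Prop :=
  prefLt (P i) (some s) (μ i) ∧
    ((Finset.univ.filter (fun j => μ j = some s)).card < q s ∨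
      ∃ j : I, μ j = some s ∧ prioLt (prio s) i j)

/-- `i` is a blocking student for `μ` under `(P, prio, q)`. -/
def BlockingStudent (P : I → List (Option S)) (prio : S → List I) (q : S → ℕ)
    (μ : I → Option S) (i : I) : Prop :=
  ∃ s : S, Blocks P prio q μ i s

/-- `μ` is individually rational under `P`. -/
def IndividuallyRational (P : I → List (Option S)) (μ : I → Option S) : Prop :=
  ∀ i : I, ¬ prefLt (P i) none (μ i)

/-- `μ` is stable at `(P, prio, q)`. -/
def IsStable (P : I → List (Option S)) (prio : S → List I) (q : S → ℕ)
    (μ : I → Option S) : Prop :=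
  IndividuallyRational P μ ∧ ∀ i : I, ¬ BlockingStudent P prio q μ i

/-- The number of blocking students for `μ` under `(P, prio, q)`. -/
noncomputable def numBlocking (P : I → List (Option S)) (prio : S → List I) (q : S → ℕ)
    (μ : I → Option S) : ℕ :=
  {i : I | BlockingStudent P prio q μ i}.ncard

/-! ### The Gale–Shapley student-proposing deferred acceptance mechanism

The state `σ : I → ℕ` records, for each student, how many of her acceptable schools
have already rejected her; she currently applies to the `σ i`-th school on her list
(if any).  At each round every school tentatively keeps the `q s` highest-priority
students among its current applicants and rejects the rest, who move on. -/

/-- The school student `i` currently applies to. -/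
def daTarget (P : I → List (Option S)) (σ : I → ℕ) (i : I) : Option S :=
  (acceptables (P i))[σ i]?

/-- The students tentatively held by school `s`: the `q s` highest-priority current
applicants. -/
def daHeld (P : I → List (Option S)) (prio : S → List I) (q : S → ℕ)
    (σ : I → ℕ) (s : S) : List I :=
  ((prio s).filter (fun i => decide (daTarget P σ i = some s))).take (q s)

/-- One round of deferred acceptance: every rejected student moves to her next choice. -/
def daStep (P : I → List (Option S)) (prio : S → List I) (q : S → ℕ)
    (σ : I → ℕ) : I → ℕ := fun i =>
  match daTarget P σ i with
  | none => σ i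
  | some s => if i ∈ daHeld P prio q σ s then σ i else σ i + 1

/-- The Gale–Shapley (student-proposing deferred acceptance) mechanism.  Iterating the
round map `|I| * |S| + 1` times is guaranteed to reach the terminal state. -/
def GS (P : I → List (Option S)) (prio : S → List I) (q : S → ℕ) : I → Option S :=
  fun i =>
    let σ := (daStep P prio q)^[Fintype.card I * Fintype.card S + 1] (fun _ => 0)
    match daTarget P σ i with
    | none => none
    | some s => if i ∈ daHeld P prio q σ s then some s else none

/-- The constrained Gale–Shapley mechanism `GS^k`. -/
def GSk (k : ℕ) (P : I → List (Option S)) (prio : S → List I) (q : S → ℕ) : I → Option S :=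
  GS (fun i => truncate (P i) k) prio q

/-! ### The Boston (immediate acceptance) mechanism -/

/-- Round `t` of the Boston mechanism: each not-yet-accepted student applies to her
`t`-th ranked acceptable school (0-indexed), and each school permanently accepts, up to
its remaining capacity, its highest-priority new applicants. -/
def bostonRound (P : I → List (Option S)) (prio : S → List I) (q : S → ℕ)
    (μ : I → Option S) (t : ℕ) : I → Option S := fun i =>
  match μ i with
  | some s => some s
  | none =>
    match (acceptables (P i))[t]? with
    | none => none
    | some s =>
      if i ∈ ((prio s).filter
            (fun j => decide (μ j = none ∧ (acceptables (P j))[t]? = some s))).take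
          (q s - (Finset.univ.filter (fun j => μ j = some s)).card)
      then some s else none

/-- The Boston (immediate acceptance) mechanism. -/
def Boston (P : I → List (Option S)) (prio : S → List I) (q : S → ℕ) : I → Option S :=
  (List.range (Fintype.card S)).foldl (bostonRound P prio q) (fun _ => none)

/-- The constrained Boston mechanism `β^k`. -/
def Bostonk (k : ℕ) (P : I → List (Option S)) (prio : S → List I) (q : S → ℕ) :
    I → Option S :=
  Boston (fun i => truncate (P i) k) prio q

/-! ### The first-preference-first mechanism -/

/-- The adjusted priority profile: each first-preference-first school (member of `fpf`)
ranks students first by the rank they assign to it under `P` (counting the ranking of the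
outside option as well), ties broken by the original priority; equal-preference schools
keep their original priority. -/
def fpfPrio (fpf : Finset S) (P : I → List (Option S)) (prio : S → List I) : S → List I :=
  fun s =>
    if s ∈ fpf then
      (List.range (Fintype.card S + 1)).flatMap
        (fun r => (prio s).filter (fun i => decide ((P i).idxOf (some s) = r)))
    else prio s

/-- The first-preference-first mechanism with set `fpf` of first-preference-first
schools: Gale–Shapley run on the adjusted priorities. -/
def FPF (fpf : Finset S) (P : I → List (Option S)) (prio : S → List I) (q : S → ℕ) :
    I → Option S :=
  GS P (fpfPrio fpf P prio) q

/-- The constrained first-preference-first mechanism `FPF^k`. -/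
def FPFk (fpf : Finset S) (k : ℕ) (P : I → List (Option S)) (prio : S → List I)
    (q : S → ℕ) : I → Option S :=
  FPF fpf (fun i => truncate (P i) k) prio q

/-! ### Manipulation and equilibrium notions -/

/-- Student `i` is a manipulating student of the mechanism `φ` (with priorities and
capacities fixed) at the true profile `P`. -/
def ManipulatingStudent (φ : (I → List (Option S)) → I → Option S)
    (P : I → List (Option S)) (i : I) : Prop :=
  ∃ Q : List (Option S), ValidPref Q ∧
    prefLt (P i) (φ (Function.update P i Q) i) (φ P i)

/-- The mechanism `φ` is not manipulable at `P`. -/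
def NotManipulable (φ : (I → List (Option S)) → I → Option S)
    (P : I → List (Option S)) : Prop :=
  ∀ i : I, ¬ ManipulatingStudent φ P i

/-- `P'` is a Nash equilibrium of the game `(φ, P)` in which the sophisticated students
are the members of `M` (who may misreport, and best respond) and all other (sincere)
students report truthfully. -/
def NashEq (φ : (I → List (Option S)) → I → Option S) (P : I → List (Option S))
    (M : Finset I) (P' : I → List (Option S)) : Prop :=
  (∀ i, ValidPref (P' i)) ∧ (∀ i ∉ M, P' i = P i) ∧
    ∀ i ∈ M, ∀ Q : List (Option S), ValidPref Q →
      ¬ prefLt (P i) (φ (Function.update P' i Q) i) (φ P' i)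

/-! ### Semi-sophisticated students -/

/-- Student `i` is guaranteed her first choice `s`: `s` is her most-preferred acceptable
school and `i` is among the `q s` highest-priority students at `s`. -/
def GuaranteedFirstChoice (P : I → List (Option S)) (prio : S → List I) (q : S → ℕ)
    (i : I) (s : S) : Prop :=
  (acceptables (P i)).head? = some s ∧ (prio s).idxOf i < q s

instance (P : I → List (Option S)) (prio : S → List I) (q : S → ℕ) (i : I) (s : S) :
    Decidable (GuaranteedFirstChoice P prio q i s) :=
  inferInstanceAs (Decidable (_ ∧ _))

/-- School `s` is competitive: at least `q s` students are guaranteed their first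
choice `s`. -/
def Competitive (P : I → List (Option S)) (prio : S → List I) (q : S → ℕ) (s : S) : Prop :=
  q s ≤ (Finset.univ.filter (fun i => GuaranteedFirstChoice P prio q i s)).card

instance (P : I → List (Option S)) (prio : S → List I) (q : S → ℕ) (s : S) :
    Decidable (Competitive P prio q s) :=
  inferInstanceAs (Decidable (_ ≤ _))

/-- `P'` is a Nash equilibrium of the game `(GS^ℓ, P)` with semi-sophisticated students:
every student guaranteed her first choice reports truthfully; every other student reports
truthfully if she has at most `ℓ` acceptable schools or all her acceptable schools are
competitive, and otherwise lists as acceptable, in the order given by her true preference,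
only her acceptable schools that are not competitive. -/
def SemiSophProfile (ℓ : ℕ) (P : I → List (Option S)) (prio : S → List I) (q : S → ℕ)
    (P' : I → List (Option S)) : Prop :=
  ∀ i : I,
    ((∃ s : S, GuaranteedFirstChoice P prio q i s) → P' i = P i) ∧
    (¬ (∃ s : S, GuaranteedFirstChoice P prio q i s) →
      (((acceptables (P i)).length ≤ ℓ ∨ ∀ s ∈ acceptables (P i), Competitive P prio q s) →
          P' i = P i) ∧
      (¬ ((acceptables (P i)).length ≤ ℓ ∨
            ∀ s ∈ acceptables (P i), Competitive P prio q s) →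
          acceptables (P' i) =
            (acceptables (P i)).filter (fun s => decide (¬ Competitive P prio q s))))


/-!
Let `μ = GS^k(P)` and suppose `i` does not block `μ` under `P`. Give `i` back her full list
while the others keep their truncated ones; call this profile `V`, so that `μ = GS` of `V` with
`i`'s list truncated. Since `i` does not block `μ`, `μ` is stable at `V`. A manipulation of
`GS^k` is a manipulation of `GS` at `V`, and `GS` is strategy-proof, so `GS(V)` gives `i` a
school strictly better than `μ(i)`. If `μ(i)` is a school, `GS(V)` is then also stable for the
truncated profile, contradicting the student-optimality of `μ` there. If `μ(i) = ∅`, the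
stable matching `μ` of `V` leaves unmatched a student whom the student-optimal stable matching
`GS(V)` matches, contradicting the rural hospitals theorem.

Strategy-proofness of `GS` follows the same pattern: if reporting `Q` gets `i` the school `s'`,
which she truly prefers to `GS(R)(i)`, then with `s'` as her only acceptable school `GS` still
matches her, while truncating her true list right after `s'` leaves her unmatched in a matching
that is stable for the former report, again against the rural hospitals theorem.
-/

section Lists

open List

variable {α : Type*} [DecidableEq α] {l l' : List α}

theorem _root_.List.Nodup.pairwise_idxOf_lt (hl : l.Nodup) :
    l.Pairwise (fun a b => l.idxOf a < l.idxOf b) :=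
  pairwise_iff_getElem.2 fun i j hi hj hij => by
    rwa [hl.idxOf_getElem, hl.idxOf_getElem]

theorem _root_.List.Sublist.idxOf_lt_idxOf_iff (h : l' <+ l) (hl : l.Nodup) {a b : α} (ha : a ∈ l')
    (hb : b ∈ l') : l'.idxOf a < l'.idxOf b ↔ l.idxOf a < l.idxOf b := by
  have hmono : ∀ {x y : α}, x ∈ l' → y ∈ l' → l'.idxOf x < l'.idxOf y →
      l.idxOf x < l.idxOf y := fun hx hy hxy => by
    have := pairwise_iff_getElem.1 (hl.pairwise_idxOf_lt.sublist h) _ _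
      (idxOf_lt_length_iff.2 hx) (idxOf_lt_length_iff.2 hy) hxy
    rwa [getElem_idxOf, getElem_idxOf] at this
  refine ⟨hmono ha hb, fun hab => ?_⟩
  rcases lt_trichotomy (l'.idxOf a) (l'.idxOf b) with hlt | heq | hgt
  · exact hlt
  · rw [(idxOf_inj ha).1 heq] at hab
    exact absurd hab (lt_irrefl _)
  · exact absurd (hmono hb ha hgt) (lt_asymm hab)

theorem _root_.List.Sublist.idxOf_lt_of_mem_take_of_notMem_take (h : l' <+ l) (hl : l.Nodup) {n : ℕ}
    {x j : α} (hj : j ∈ l') (hjn : j ∉ l'.take n) (hx : x ∈ l'.take n) :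
    l.idxOf x < l.idxOf j := by
  have hx' := mem_of_mem_take hx
  rw [mem_take_iff_idxOf_lt hx'] at hx
  rw [mem_take_iff_idxOf_lt hj] at hjn
  exact (h.idxOf_lt_idxOf_iff hl hx' hj).1 (by omega)

theorem _root_.List.Sublist.idxOf_lt_of_mem_take (h : l' <+ l) (hl : l.Nodup) {B : List α}
    (hB : B.Nodup) (hBl' : B ⊆ l') {j : α} (hBj : ∀ y ∈ B, l.idxOf y < l.idxOf j) {x : α}
    (hx : x ∈ l'.take B.length) : l.idxOf x < l.idxOf j := by
  have hx' := mem_of_mem_take hx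
  rw [mem_take_iff_idxOf_lt hx'] at hx
  by_contra hjx
  have hBx : B ⊆ l'.take (l'.idxOf x) := fun y hy => by
    rw [mem_take_iff_idxOf_lt (hBl' hy), h.idxOf_lt_idxOf_iff hl (hBl' hy) hx']
    exact lt_of_lt_of_le (hBj y hy) (not_lt.1 hjx)
  have := (hB.subperm hBx).length_le
  rw [length_take] at this
  omega

end Lists

theorem _root_.Function.isFixedPt_iterate_of_potential {α : Type*} {g : α → α} {x : α}
    (Φ : α → ℕ) {B : ℕ} (hB : ∀ t, Φ (g^[t] x) ≤ B) (hΦ : ∀ y, g y ≠ y → Φ y < Φ (g y))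
    {n : ℕ} (hn : B ≤ n) : Function.IsFixedPt g (g^[n] x) := by
  by_contra hfix
  have hmoving : ∀ t ≤ n, g (g^[t] x) ≠ g^[t] x := fun t ht heq => by
    apply hfix
    rw [← Nat.sub_add_cancel ht, Function.iterate_add_apply, Function.iterate_fixed heq]
    exact heq
  have hgrow : ∀ t ≤ n + 1, t ≤ Φ (g^[t] x) := by
    intro t
    induction t with
    | zero => simp
    | succ t ih =>
      intro ht
      have := hΦ _ (hmoving t (by omega))
      rw [Function.iterate_succ_apply']
      have := ih (by omega)
      omega
  have := hgrow (n + 1) le_rfl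
  have := hB (n + 1)
  omega

theorem _root_.Nat.exists_eq_and_succ_eq_of_lt {g : ℕ → ℕ} (h0 : g 0 = 0)
    (hg : ∀ t, g (t + 1) ≤ g t + 1) {m T : ℕ} (hm : m < g T) :
    ∃ t < T, g t = m ∧ g (t + 1) = m + 1 := by
  induction T with
  | zero => omega
  | succ T ih =>
    by_cases hT : m < g T
    · obtain ⟨t, ht, h⟩ := ih hT
      exact ⟨t, by omega, h⟩
    · have := hg T
      exact ⟨T, by omega, by omega, by omega⟩

section Preferences

variable {S : Type*} {p : List (Option S)}

theorem acceptables_map_some_append (A : List S) (r : List (Option S)) :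
    acceptables (A.map some ++ none :: r) = A := by
  induction A with
  | nil => simp [acceptables]
  | cons a A ih => simp [acceptables] at ih ⊢

theorem ValidPref.eq_map_some_append (hp : ValidPref p) :
    ∃ r, p = (acceptables p).map some ++ none :: r := by
  have htake : (acceptables p).map some = p.takeWhile Option.isSome := by
    rw [acceptables, List.map_filterMap_some_eq_filter_map_isSome, List.map_id_fun, id,
      List.filter_eq_self]
    exact fun x hx => List.mem_takeWhile_imp hx
  have hdrop : p.dropWhile Option.isSome ≠ [] := by
    intro hnil
    have hnone := hp.2 none
    rw [← List.takeWhile_append_dropWhile (p := Option.isSome) (l := p), hnil,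
      List.append_nil] at hnone
    simpa using List.mem_takeWhile_imp hnone
  obtain ⟨y, r, hyr⟩ := List.exists_cons_of_ne_nil hdrop
  have hy : y = none := by
    simpa [hyr] using List.head_dropWhile_not Option.isSome hdrop
  refine ⟨r, ?_⟩
  rw [htake, ← hy, ← hyr, List.takeWhile_append_dropWhile]

theorem ValidPref.nodup_acceptables (hp : ValidPref p) : (acceptables p).Nodup := by
  obtain ⟨r, hr⟩ := hp.eq_map_some_append
  have := hp.1
  rw [hr] at this
  exact (List.nodup_append.1 this).1.of_map some

variable [DecidableEq S]

theorem ValidPref.idxOf_injective (hp : ValidPref p) {a b : Option S}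
    (h : p.idxOf a = p.idxOf b) : a = b :=
  (List.idxOf_inj (hp.2 a)).1 h

theorem ValidPref.idxOf_getElem? (hp : ValidPref p) (m : ℕ) :
    p.idxOf (acceptables p)[m]? = min m (acceptables p).length := by
  obtain ⟨r, hr⟩ := hp.eq_map_some_append
  set A := acceptables p
  rcases lt_or_ge m A.length with hm | hm
  · rw [List.getElem?_eq_getElem hm]
    conv_lhs => rw [hr]
    have hmem : some A[m] ∈ A.map some := List.mem_map_of_mem (List.getElem_mem hm)
    rw [List.idxOf_append_of_mem hmem, ← List.getElem_map some (h := by simpa using hm),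
      (hp.nodup_acceptables.map (Option.some_injective S)).idxOf_getElem]
    omega
  · rw [List.getElem?_eq_none hm]
    conv_lhs => rw [hr]
    rw [List.idxOf_append_of_notMem (by simp), List.idxOf_cons_self]
    simp only [List.length_map]
    omega

theorem ValidPref.idxOf_none (hp : ValidPref p) : p.idxOf none = (acceptables p).length := by
  simpa using hp.idxOf_getElem? (acceptables p).length

theorem ValidPref.getElem?_idxOf (hp : ValidPref p) {o : Option S}
    (ho : p.idxOf o ≤ p.idxOf none) : (acceptables p)[p.idxOf o]? = o := by
  apply hp.idxOf_injective
  rw [hp.idxOf_getElem?, ← hp.idxOf_none]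
  omega

theorem acceptables_truncate (p : List (Option S)) (n : ℕ) :
    acceptables (truncate p n) = (acceptables p).take n :=
  acceptables_map_some_append _ _

theorem validPref_truncate (hp : ValidPref p) (n : ℕ) : ValidPref (truncate p n) := by
  have hA : (((acceptables p).take n).map some).Nodup :=
    (hp.nodup_acceptables.sublist (List.take_sublist _ _)).map (Option.some_injective S)
  refine ⟨?_, fun x => ?_⟩
  · rw [truncate, List.nodup_append, List.nodup_cons]
    refine ⟨hA, ⟨by simp, hp.1.filter _⟩, ?_⟩
    rintro x hx _ hy rfl
    rcases List.mem_cons.1 hy with rfl | hy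
    · obtain ⟨_, _, h⟩ := List.mem_map.1 hx
      exact nomatch h
    · simp_all
  · by_cases hx : x ∈ ((acceptables p).take n).map some
    · exact List.mem_append_left _ hx
    · rcases x with _ | s
      · simp [truncate]
      · simp_all [truncate, hp.2]

theorem ValidPref.idxOf_none_truncate (hp : ValidPref p) (n : ℕ) :
    (truncate p n).idxOf none = min n (acceptables p).length := by
  rw [(validPref_truncate hp n).idxOf_none, acceptables_truncate, List.length_take]

theorem ValidPref.min_idxOf_truncate (hp : ValidPref p) (n : ℕ) (o : Option S) :
    min ((truncate p n).idxOf o) (min n (acceptables p).length) =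
      min (p.idxOf o) (min n (acceptables p).length) := by
  have hq := validPref_truncate hp n
  have hlen : (acceptables (truncate p n)).length = min n (acceptables p).length := by
    rw [acceptables_truncate, List.length_take]
  have hget : ∀ r < n, (acceptables (truncate p n))[r]? = (acceptables p)[r]? := fun r hr => by
    rw [acceptables_truncate, List.getElem?_take_of_lt hr]
  have hp_lt : p.idxOf o < min n (acceptables p).length →
      (truncate p n).idxOf o = p.idxOf o := fun h => by
    have ho := hp.getElem?_idxOf (o := o) (by rw [hp.idxOf_none]; omega)
    rw [← hget _ (by omega)] at ho
    conv_lhs => rw [← ho]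
    rw [hq.idxOf_getElem?]
    omega
  have hq_lt : (truncate p n).idxOf o < min n (acceptables p).length →
      p.idxOf o = (truncate p n).idxOf o := fun h => by
    have ho := hq.getElem?_idxOf (o := o) (by rw [hq.idxOf_none]; omega)
    rw [hget _ (by omega)] at ho
    conv_lhs => rw [← ho]
    rw [hp.idxOf_getElem?]
    omega
  omega

theorem ValidPref.idxOf_lt_of_truncate (hp : ValidPref p) {n : ℕ} {o : Option S}
    (hIR : ¬ prefLt (truncate p n) none o) (ho : o ≠ none) :
    p.idxOf o < min n (acceptables p).length := by
  have hne : (truncate p n).idxOf o ≠ (truncate p n).idxOf none :=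
    fun h => ho ((validPref_truncate hp n).idxOf_injective h)
  have := hp.min_idxOf_truncate n o
  unfold prefLt at hIR
  rw [hp.idxOf_none_truncate] at hIR hne
  omega

noncomputable def soleAcceptable [Fintype S] (s : S) : List (Option S) :=
  some s :: none :: (Finset.univ.erase s).toList.map some

theorem validPref_soleAcceptable [Fintype S] (s : S) : ValidPref (soleAcceptable s) := by
  refine ⟨?_, fun x => ?_⟩
  · simp [soleAcceptable, List.Nodup.map (Option.some_injective S), Finset.nodup_toList]
  · rcases x with _ | t
    · simp [soleAcceptable]
    · by_cases ht : t = s <;> simp [soleAcceptable, ht]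

theorem idxOf_some_soleAcceptable [Fintype S] (s : S) :
    (soleAcceptable s).idxOf (some s) = 0 :=
  List.idxOf_cons_self

theorem idxOf_none_soleAcceptable [Fintype S] (s : S) : (soleAcceptable s).idxOf none = 1 := by
  rw [(validPref_soleAcceptable s).idxOf_none, soleAcceptable,
    show some s :: none :: _ = [s].map some ++ none :: _ from rfl, acceptables_map_some_append,
    List.length_singleton]

end Preferences

section DeferredAcceptance

variable {I S : Type*} [DecidableEq S]

variable (R : I → List (Option S)) (prio : S → List I) in
def applicants (σ : I → ℕ) (s : S) : List I :=
  (prio s).filter (fun i => decide (daTarget R σ i = some s))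

variable {R : I → List (Option S)} {prio : S → List I} {q : S → ℕ} {σ : I → ℕ} {i : I} {s : S}

theorem daHeld_eq_take : daHeld R prio q σ s = (applicants R prio σ s).take (q s) := rfl

theorem applicants_sublist : (applicants R prio σ s).Sublist (prio s) := List.filter_sublist

theorem nodup_daHeld (hprio : ValidPrio (prio s)) : (daHeld R prio q σ s).Nodup :=
  (hprio.1.sublist applicants_sublist).sublist (List.take_sublist _ _)

theorem mem_applicants (hprio : ValidPrio (prio s)) :
    i ∈ applicants R prio σ s ↔ daTarget R σ i = some s := by
  simp [applicants, hprio.2 i]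

theorem daTarget_of_mem_daHeld (h : i ∈ daHeld R prio q σ s) : daTarget R σ i = some s := by
  simpa using (List.mem_filter.1 (List.mem_of_mem_take h)).2

theorem idxOf_eq_of_daTarget_eq_some (hR : ValidPref (R i)) (h : daTarget R σ i = some s) :
    (R i).idxOf (some s) = σ i := by
  have := (List.getElem?_eq_some_iff.1 h).1
  rw [← h, daTarget, hR.idxOf_getElem?]
  omega

variable [DecidableEq I]

variable (R prio q) in
def daState (t : ℕ) : I → ℕ := (daStep R prio q)^[t] (fun _ => 0)

theorem daState_succ (t : ℕ) :
    daState R prio q (t + 1) = daStep R prio q (daState R prio q t) :=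
  Function.iterate_succ_apply' _ _ _

theorem daStep_of_mem_daHeld (h : i ∈ daHeld R prio q σ s) : daStep R prio q σ i = σ i := by
  simp [daStep, daTarget_of_mem_daHeld h, h]

theorem daStep_of_notMem_daHeld (htar : daTarget R σ i = some s)
    (h : i ∉ daHeld R prio q σ s) : daStep R prio q σ i = σ i + 1 := by
  simp [daStep, htar, h]

theorem daStep_eq_or_rejected (σ : I → ℕ) (i : I) :
    daStep R prio q σ i = σ i ∨ daStep R prio q σ i = σ i + 1 ∧
      ∃ s, daTarget R σ i = some s ∧ i ∉ daHeld R prio q σ s := by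
  rcases htar : daTarget R σ i with _ | s
  · simp [daStep, htar]
  · by_cases h : i ∈ daHeld R prio q σ s
    · exact Or.inl (daStep_of_mem_daHeld h)
    · exact Or.inr ⟨daStep_of_notMem_daHeld htar h, s, rfl, h⟩

theorem le_daStep (σ : I → ℕ) (i : I) : σ i ≤ daStep R prio q σ i := by
  rcases daStep_eq_or_rejected (R := R) (prio := prio) (q := q) σ i with h | ⟨h, -⟩ <;> omega

theorem daStep_le_succ (σ : I → ℕ) (i : I) : daStep R prio q σ i ≤ σ i + 1 := by
  rcases daStep_eq_or_rejected (R := R) (prio := prio) (q := q) σ i with h | ⟨h, -⟩ <;> omega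

theorem daState_le_length (t : ℕ) (i : I) :
    daState R prio q t i ≤ (acceptables (R i)).length := by
  induction t with
  | zero => exact Nat.zero_le _
  | succ t ih =>
    rw [daState_succ]
    rcases daStep_eq_or_rejected (R := R) (prio := prio) (q := q) (daState R prio q t) i with
      h | ⟨h, s, htar, -⟩
    · omega
    · have := (List.getElem?_eq_some_iff.1 htar).1
      omega

variable (R prio q) in
def FullAbove (σ : I → ℕ) (s : S) (j : I) : Prop :=
  (daHeld R prio q σ s).length = q s ∧ ∀ x ∈ daHeld R prio q σ s, prioLt (prio s) x j

theorem fullAbove_of_notMem_daHeld (hprio : ValidPrio (prio s)) {j : I}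
    (htar : daTarget R σ j = some s) (hj : j ∉ daHeld R prio q σ s) :
    FullAbove R prio q σ s j := by
  have hjA : j ∈ applicants R prio σ s := (mem_applicants hprio).2 htar
  rw [daHeld_eq_take] at hj
  refine ⟨?_, fun x hx =>
    applicants_sublist.idxOf_lt_of_mem_take_of_notMem_take hprio.1 hjA hj hx⟩
  have := List.idxOf_lt_length_iff.2 hjA
  rw [List.mem_take_iff_idxOf_lt hjA] at hj
  rw [daHeld_eq_take, List.length_take]
  omega

theorem mem_applicants_daStep_of_mem_daHeld (hprio : ValidPrio (prio s)) {x : I}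
    (hx : x ∈ daHeld R prio q σ s) : x ∈ applicants R prio (daStep R prio q σ) s := by
  rw [mem_applicants hprio, daTarget, daStep_of_mem_daHeld hx]
  exact daTarget_of_mem_daHeld hx

/-- Held students apply to `s` again, so the new top `q s` applicants still rank above `j`. -/
theorem FullAbove.step {j : I} (hprio : ValidPrio (prio s)) (h : FullAbove R prio q σ s j) :
    FullAbove R prio q (daStep R prio q σ) s j := by
  obtain ⟨hlen, habove⟩ := h
  have hsub : daHeld R prio q σ s ⊆ applicants R prio (daStep R prio q σ) s :=
    fun x hx => mem_applicants_daStep_of_mem_daHeld hprio hx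
  have hle := ((nodup_daHeld hprio).subperm hsub).length_le
  rw [hlen] at hle
  refine ⟨by rw [daHeld_eq_take, List.length_take, min_eq_left hle], fun x hx => ?_⟩
  rw [daHeld_eq_take, ← hlen] at hx
  exact applicants_sublist.idxOf_lt_of_mem_take hprio.1 (nodup_daHeld hprio) hsub habove hx

theorem FullAbove.mono {j : I} (hprio : ValidPrio (prio s)) {t u : ℕ} (htu : t ≤ u)
    (h : FullAbove R prio q (daState R prio q t) s j) :
    FullAbove R prio q (daState R prio q u) s j := by
  induction u, htu using Nat.le_induction with
  | base => exact h
  | succ u _ ih => rw [daState_succ]; exact ih.step hprio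

variable [Fintype I]

theorem exists_mem_daHeld_ne_of_fullAbove {ζ : I → Option S} (hζm : IsMatching q ζ) {j : I}
    (hprio : ValidPrio (prio s)) (hfull : FullAbove R prio q σ s j) (hj : ζ j = some s) :
    ∃ x ∈ daHeld R prio q σ s, ζ x ≠ some s := by
  by_contra! hall
  have hjnot : j ∉ (daHeld R prio q σ s).toFinset := fun hmem =>
    lt_irrefl _ (hfull.2 j (List.mem_toFinset.1 hmem))
  have hsub : insert j (daHeld R prio q σ s).toFinset ⊆
      Finset.univ.filter fun x => ζ x = some s := by
    intro x hx
    rcases Finset.mem_insert.1 hx with rfl | hx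
    · simpa using hj
    · simpa using hall x (List.mem_toFinset.1 hx)
  have := Finset.card_le_card hsub
  rw [Finset.card_insert_of_notMem hjnot, List.toFinset_card_of_nodup (nodup_daHeld hprio),
    hfull.1] at this
  have := hζm s
  omega

theorem exists_blocks_of_rejected (hR : ∀ i, ValidPref (R i)) (hprio : ValidPrio (prio s))
    {ζ : I → Option S} (hζm : IsMatching q ζ) (hσ : ∀ x, σ x ≤ (R x).idxOf (ζ x)) {j : I}
    (htar : daTarget R σ j = some s) (hrej : j ∉ daHeld R prio q σ s) (hj : ζ j = some s) :
    ∃ x, Blocks R prio q ζ x s := by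
  have hfull := fullAbove_of_notMem_daHeld hprio htar hrej
  obtain ⟨x, hx, hxs⟩ := exists_mem_daHeld_ne_of_fullAbove hζm hprio hfull hj
  have hidx := idxOf_eq_of_daTarget_eq_some (hR x) (daTarget_of_mem_daHeld hx)
  have hne : (R x).idxOf (some s) ≠ (R x).idxOf (ζ x) :=
    fun h => hxs ((hR x).idxOf_injective h).symm
  refine ⟨x, ?_, Or.inr ⟨j, hj, hfull.2 x hx⟩⟩
  have := hσ x
  unfold prefLt
  omega

theorem daState_le_idxOf_of_isStable (hR : ∀ i, ValidPref (R i))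
    (hprio : ∀ s, ValidPrio (prio s)) {ζ : I → Option S} (hζm : IsMatching q ζ)
    (hζ : IsStable R prio q ζ) (t : ℕ) (j : I) : daState R prio q t j ≤ (R j).idxOf (ζ j) := by
  induction t generalizing j with
  | zero => exact Nat.zero_le _
  | succ t ih =>
    rw [daState_succ]
    rcases daStep_eq_or_rejected (R := R) (prio := prio) (q := q) (daState R prio q t) j with
      h | ⟨h, s, htar, hrej⟩
    · exact h ▸ ih j
    by_contra! hlt
    have hζj : ζ j = some s := by
      rw [← (hR j).getElem?_idxOf (not_lt.1 (hζ.1 j)), ← htar, daTarget]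
      congr 1
      have := ih j
      omega
    obtain ⟨x, hx⟩ := exists_blocks_of_rejected hR (hprio s) hζm ih htar hrej hζj
    exact hζ.2 x ⟨s, hx⟩

variable [Fintype S]

variable (R prio q) in
def daFinal : I → ℕ := daState R prio q (Fintype.card I * Fintype.card S + 1)

theorem isFixedPt_daFinal (hR : ∀ i, ValidPref (R i)) :
    Function.IsFixedPt (daStep R prio q) (daFinal R prio q) := by
  refine Function.isFixedPt_iterate_of_potential (fun σ => ∑ i, σ i) (fun t => ?_)
    (fun σ hσ => ?_) (Nat.le_succ _)
  · calc ∑ i, daState R prio q t i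
        ≤ ∑ _i : I, Fintype.card S := Finset.sum_le_sum fun i _ =>
          (daState_le_length t i).trans (hR i).nodup_acceptables.length_le_card
      _ = Fintype.card I * Fintype.card S := by simp
  · obtain ⟨i, hi⟩ := Function.ne_iff.1 hσ
    exact Finset.sum_lt_sum (fun i _ => le_daStep σ i)
      ⟨i, Finset.mem_univ i, lt_of_le_of_ne (le_daStep σ i) (Ne.symm hi)⟩

theorem mem_daHeld_daFinal (hR : ∀ i, ValidPref (R i))
    (h : daTarget R (daFinal R prio q) i = some s) :
    i ∈ daHeld R prio q (daFinal R prio q) s := by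
  by_contra hi
  have := congrFun (isFixedPt_daFinal (prio := prio) (q := q) hR) i
  rw [daStep_of_notMem_daHeld h hi] at this
  omega

theorem gs_eq_daTarget (hR : ∀ i, ValidPref (R i)) (i : I) :
    GS R prio q i = daTarget R (daFinal R prio q) i := by
  change (match daTarget R (daFinal R prio q) i with
    | none => none
    | some s => if i ∈ daHeld R prio q (daFinal R prio q) s then some s else none) = _
  rcases h : daTarget R (daFinal R prio q) i with _ | s
  · rfl
  · simp [mem_daHeld_daFinal hR h]

theorem idxOf_gs (hR : ∀ i, ValidPref (R i)) (i : I) :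
    (R i).idxOf (GS R prio q i) = min (daFinal R prio q i) (acceptables (R i)).length := by
  rw [gs_eq_daTarget hR, daTarget, (hR i).idxOf_getElem?]

theorem gs_eq_some_iff (hR : ∀ i, ValidPref (R i)) :
    GS R prio q i = some s ↔ i ∈ daHeld R prio q (daFinal R prio q) s := by
  rw [gs_eq_daTarget hR]
  exact ⟨mem_daHeld_daFinal hR, daTarget_of_mem_daHeld⟩

theorem card_gs_eq_some (hR : ∀ i, ValidPref (R i)) (hprio : ValidPrio (prio s)) :
    (Finset.univ.filter fun i => GS R prio q i = some s).card =
      (daHeld R prio q (daFinal R prio q) s).length := by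
  rw [← List.toFinset_card_of_nodup (nodup_daHeld hprio)]
  congr 1
  ext i
  simp [gs_eq_some_iff hR]

theorem gs_isMatching (hR : ∀ i, ValidPref (R i)) (hprio : ∀ s, ValidPrio (prio s)) :
    IsMatching q (GS R prio q) := fun s => by
  rw [card_gs_eq_some hR (hprio s), daHeld_eq_take]
  exact List.length_take_le _ _

theorem fullAbove_daFinal_of_prefLt_gs (hR : ∀ i, ValidPref (R i))
    (hprio : ValidPrio (prio s)) (h : prefLt (R i) (some s) (GS R prio q i)) :
    FullAbove R prio q (daFinal R prio q) s i := by
  unfold prefLt at h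
  rw [idxOf_gs hR] at h
  set r := (R i).idxOf (some s)
  have hacc : (acceptables (R i))[r]? = some s :=
    (hR i).getElem?_idxOf (by rw [(hR i).idxOf_none]; omega)
  obtain ⟨t, ht, hrt, hrt'⟩ := Nat.exists_eq_and_succ_eq_of_lt (g := (daState R prio q · i))
    rfl (fun t => by simpa only [daState_succ] using daStep_le_succ _ i)
    (show r < daFinal R prio q i by omega)
  have htar : daTarget R (daState R prio q t) i = some s := by rw [daTarget, hrt, hacc]
  have hrej : i ∉ daHeld R prio q (daState R prio q t) s := fun hi => by
    have := daStep_of_mem_daHeld hi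
    rw [← daState_succ] at this
    omega
  exact (fullAbove_of_notMem_daHeld hprio htar hrej).mono hprio ht.le

theorem isStable_gs (hR : ∀ i, ValidPref (R i)) (hprio : ∀ s, ValidPrio (prio s)) :
    IsStable R prio q (GS R prio q) := by
  refine ⟨fun i => ?_, fun i ⟨s, hpref, hseat⟩ => ?_⟩
  · unfold prefLt
    rw [idxOf_gs hR, (hR i).idxOf_none]
    omega
  obtain ⟨hfull, habove⟩ := fullAbove_daFinal_of_prefLt_gs hR (hprio s) hpref
  rcases hseat with hlt | ⟨j, hj, hij⟩
  · rw [card_gs_eq_some hR (hprio s)] at hlt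
    omega
  · have := habove j ((gs_eq_some_iff hR).1 hj)
    unfold prioLt at this hij
    omega

theorem not_prefLt_gs_of_isStable (hR : ∀ i, ValidPref (R i))
    (hprio : ∀ s, ValidPrio (prio s)) {ζ : I → Option S} (hζm : IsMatching q ζ)
    (hζ : IsStable R prio q ζ) (j : I) : ¬ prefLt (R j) (ζ j) (GS R prio q j) := by
  have := daState_le_idxOf_of_isStable hR hprio hζm hζ (Fintype.card I * Fintype.card S + 1) j
  unfold prefLt
  rw [idxOf_gs hR]
  exact not_lt.2 (min_le_of_left_le this)

end DeferredAcceptance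

section RuralHospitals

variable {I S : Type*} [Fintype I] [DecidableEq S]

theorem card_filter_ne_none_eq_sum [Fintype S] (μ : I → Option S) :
    (Finset.univ.filter fun i => μ i ≠ none).card =
      ∑ s, (Finset.univ.filter fun i => μ i = some s).card := by
  simp only [Finset.card_filter]
  rw [Finset.sum_comm]
  refine Finset.sum_congr rfl fun i _ => ?_
  rcases μ i with _ | s <;> simp

variable [DecidableEq I] {R : I → List (Option S)} {prio : S → List I} {q : S → ℕ}
  {μ ζ : I → Option S}

theorem IsStable.card_le_card_of_forall_not_prefLt (hR : ∀ i, ValidPref (R i))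
    (hμ : IsMatching q μ) (hζ : IsStable R prio q ζ) (hdom : ∀ i, ¬ prefLt (R i) (ζ i) (μ i))
    (s : S) : (Finset.univ.filter fun i => μ i = some s).card ≤
      (Finset.univ.filter fun i => ζ i = some s).card := by
  by_cases hfree : (Finset.univ.filter fun i => ζ i = some s).card < q s
  · refine Finset.card_le_card fun i hi => ?_
    simp only [Finset.mem_filter, Finset.mem_univ, true_and] at hi ⊢
    by_contra hne
    have hne' : (R i).idxOf (some s) ≠ (R i).idxOf (ζ i) :=
      fun h => hne ((hR i).idxOf_injective h).symm
    have := hdom i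
    refine hζ.2 i ⟨s, ?_, Or.inl hfree⟩
    unfold prefLt at this ⊢
    rw [hi] at this
    omega
  · have := hμ s
    omega

variable [Fintype S]

theorem IsStable.ne_none_of_forall_not_prefLt (hR : ∀ i, ValidPref (R i))
    (hμ : IsMatching q μ) (hζ : IsStable R prio q ζ) (hdom : ∀ i, ¬ prefLt (R i) (ζ i) (μ i))
    {j : I} (hj : μ j ≠ none) : ζ j ≠ none := by
  have hsub : (Finset.univ.filter fun i => ζ i ≠ none) ⊆
      Finset.univ.filter fun i => μ i ≠ none := fun i hi => by
    simp only [Finset.mem_filter, Finset.mem_univ, true_and] at hi ⊢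
    intro hμi
    have h1 := hdom i
    have h2 := hζ.1 i
    rw [hμi] at h1
    unfold prefLt at h1 h2
    exact hi ((hR i).idxOf_injective (by omega))
  have hcard : (Finset.univ.filter fun i => μ i ≠ none).card ≤
      (Finset.univ.filter fun i => ζ i ≠ none).card := by
    rw [card_filter_ne_none_eq_sum, card_filter_ne_none_eq_sum]
    exact Finset.sum_le_sum fun s _ => hζ.card_le_card_of_forall_not_prefLt hR hμ hdom s
  have hj' : j ∈ Finset.univ.filter fun i => μ i ≠ none := by simpa using hj
  rw [← Finset.eq_of_subset_of_card_le hsub hcard] at hj'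
  simpa using hj'

end RuralHospitals

section Update

variable {I S : Type*} [DecidableEq I] {R : I → List (Option S)} {i : I}

theorem validPref_update (hR : ∀ j, ValidPref (R j)) {p : List (Option S)} (hp : ValidPref p) :
    ∀ j, ValidPref (Function.update R i p j) :=
  (Function.forall_update_iff R fun _ p => ValidPref p).2 ⟨hp, fun j _ => hR j⟩

variable [Fintype I] [DecidableEq S] {prio : S → List I} {q : S → ℕ} {ζ : I → Option S}

theorem IsStable.of_agree {A B : I → List (Option S)} (hζ : IsStable A prio q ζ)
    (hAB : ∀ j ≠ i, A j = B j) (hIR : ¬ prefLt (B i) none (ζ i))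
    (hblock : ¬ BlockingStudent B prio q ζ i) : IsStable B prio q ζ := by
  refine ⟨fun j => ?_, fun j ⟨s, hs⟩ => ?_⟩
  · by_cases hj : j = i
    · exact hj ▸ hIR
    · exact hAB j hj ▸ hζ.1 j
  · by_cases hj : j = i
    · exact hblock ⟨s, hj ▸ hs⟩
    · exact hζ.2 j ⟨s, by rw [Blocks, hAB j hj]; exact hs⟩

theorem IsStable.of_agree_of_prefLt {A B : I → List (Option S)} (hζ : IsStable A prio q ζ)
    (hAB : ∀ j ≠ i, A j = B j) (hIR : ¬ prefLt (B i) none (ζ i))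
    (hpref : ∀ s, prefLt (B i) (some s) (ζ i) → prefLt (A i) (some s) (ζ i)) :
    IsStable B prio q ζ :=
  hζ.of_agree hAB hIR fun ⟨s, hs⟩ => hζ.2 i ⟨s, hpref s hs.1, hs.2⟩

variable {n : ℕ}

theorem IsStable.of_update_truncate (hR : ValidPref (R i))
    (hζ : IsStable (Function.update R i (truncate (R i) n)) prio q ζ)
    (hblock : ¬ BlockingStudent R prio q ζ i) : IsStable R prio q ζ := by
  refine hζ.of_agree (fun j hj => Function.update_of_ne hj _ _) ?_ hblock
  rcases eq_or_ne (ζ i) none with h | h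
  · rw [h]
    exact lt_irrefl _
  · have := hR.idxOf_lt_of_truncate (by simpa using hζ.1 i) h
    unfold prefLt
    rw [hR.idxOf_none]
    omega

theorem IsStable.not_blockingStudent_of_update_truncate (hR : ValidPref (R i))
    (hζ : IsStable (Function.update R i (truncate (R i) n)) prio q ζ) (hi : ζ i ≠ none) :
    ¬ BlockingStudent R prio q ζ i := fun ⟨s, hpref, hseat⟩ => by
  have := hR.idxOf_lt_of_truncate (by simpa using hζ.1 i) hi
  have h1 := hR.min_idxOf_truncate n (some s)
  have h2 := hR.min_idxOf_truncate n (ζ i)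
  refine hζ.2 i ⟨s, ?_, hseat⟩
  unfold prefLt at hpref ⊢
  rw [Function.update_self]
  omega

theorem IsStable.update_truncate (hR : ValidPref (R i)) (hζ : IsStable R prio q ζ)
    (hi : ζ i ≠ none) (hn : (R i).idxOf (ζ i) < n) :
    IsStable (Function.update R i (truncate (R i) n)) prio q ζ := by
  have hIR := hζ.1 i
  have hne : (R i).idxOf (ζ i) ≠ (R i).idxOf none := fun h => hi (hR.idxOf_injective h)
  have h2 := hR.min_idxOf_truncate n (ζ i)
  unfold prefLt at hIR
  rw [hR.idxOf_none] at hIR hne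
  refine hζ.of_agree_of_prefLt (fun j hj => (Function.update_of_ne hj _ _).symm) ?_
    fun s hs => ?_
  · unfold prefLt
    rw [Function.update_self, hR.idxOf_none_truncate]
    omega
  · have h1 := hR.min_idxOf_truncate n (some s)
    unfold prefLt at hs ⊢
    rw [Function.update_self] at hs
    omega

variable [Fintype S] {s : S}

theorem IsStable.update_soleAcceptable (hζ : IsStable R prio q ζ) (hi : ζ i = some s) :
    IsStable (Function.update R i (soleAcceptable s)) prio q ζ := by
  have := idxOf_some_soleAcceptable s
  refine hζ.of_agree_of_prefLt (fun j hj => (Function.update_of_ne hj _ _).symm) ?_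
    fun t ht => ?_
  · rw [Function.update_self, hi]
    unfold prefLt
    omega
  · rw [Function.update_self, hi] at ht
    unfold prefLt at ht
    omega

theorem IsStable.update_soleAcceptable_of_eq_none (hζ : IsStable R prio q ζ) (hi : ζ i = none)
    (hs : prefLt (R i) (some s) none) :
    IsStable (Function.update R i (soleAcceptable s)) prio q ζ := by
  refine hζ.of_agree_of_prefLt (fun j hj => (Function.update_of_ne hj _ _).symm)
    (by rw [hi]; exact lt_irrefl _) fun t ht => ?_
  rw [Function.update_self, hi] at ht
  unfold prefLt at ht
  rw [idxOf_none_soleAcceptable] at ht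
  have hts : some t = some s := (validPref_soleAcceptable s).idxOf_injective
    (by rw [idxOf_some_soleAcceptable]; omega)
  rwa [hi, hts]

end Update

section Strategyproofness

variable {I S : Type*} [Fintype I] [DecidableEq I] [Fintype S] [DecidableEq S]
  {R : I → List (Option S)} {prio : S → List I} {q : S → ℕ} {i : I}

theorem gs_update_truncate_eq_none (hR : ∀ j, ValidPref (R j))
    (hprio : ∀ s, ValidPrio (prio s)) {n : ℕ} (hn : n ≤ (R i).idxOf (GS R prio q i)) :
    GS (Function.update R i (truncate (R i) n)) prio q i = none := by
  have hT := validPref_update hR (validPref_truncate (hR i) n) (i := i)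
  by_contra hne
  have hπ := isStable_gs (q := q) hT hprio
  have hlt := (hR i).idxOf_lt_of_truncate (by simpa using hπ.1 i) hne
  have hopt := not_prefLt_gs_of_isStable hR hprio (gs_isMatching hT hprio)
    (hπ.of_update_truncate (hR i) (hπ.not_blockingStudent_of_update_truncate (hR i) hne)) i
  unfold prefLt at hopt
  omega

theorem not_prefLt_gs_update (hR : ∀ j, ValidPref (R j)) (hprio : ∀ s, ValidPrio (prio s))
    {Q : List (Option S)} (hQ : ValidPref Q) :
    ¬ prefLt (R i) (GS (Function.update R i Q) prio q i) (GS R prio q i) := by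
  intro hlt
  obtain ⟨s, hs⟩ : ∃ s, GS (Function.update R i Q) prio q i = some s :=
    Option.ne_none_iff_exists'.1 fun h => (isStable_gs hR hprio).1 i (h ▸ hlt)
  have hgs := idxOf_gs hR (prio := prio) (q := q) i
  rw [hs] at hlt
  unfold prefLt at hlt
  set n := (R i).idxOf (some s) + 1
  have hRQ := validPref_update hR hQ (i := i)
  have hsole := validPref_update hR (validPref_soleAcceptable s) (i := i)
  have htrunc := validPref_update hR (validPref_truncate (hR i) n) (i := i)
  have hν := (isStable_gs hRQ hprio).update_soleAcceptable hs
  rw [Function.update_idem] at hν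
  have hπ : GS (Function.update R i (truncate (R i) n)) prio q i = none :=
    gs_update_truncate_eq_none hR hprio (by omega)
  have hπsole := (isStable_gs htrunc hprio).update_soleAcceptable_of_eq_none (s := s) hπ (by
    have := (hR i).min_idxOf_truncate n (some s)
    unfold prefLt
    rw [Function.update_self, (hR i).idxOf_none_truncate]
    omega)
  rw [Function.update_idem] at hπsole
  have hmatched : GS (Function.update R i (soleAcceptable s)) prio q i ≠ none := fun h => by
    have := not_prefLt_gs_of_isStable hsole hprio (gs_isMatching hRQ hprio) hν i
    rw [h, hs, Function.update_self] at this
    unfold prefLt at this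
    rw [idxOf_some_soleAcceptable, idxOf_none_soleAcceptable] at this
    omega
  exact hπsole.ne_none_of_forall_not_prefLt hsole (gs_isMatching hsole hprio)
    (not_prefLt_gs_of_isStable hsole hprio (gs_isMatching htrunc hprio) hπsole) hmatched hπ

theorem not_prefLt_gs_of_not_blockingStudent_gs_update_truncate (hR : ∀ j, ValidPref (R j))
    (hprio : ∀ s, ValidPrio (prio s)) {n : ℕ}
    (hnb : ¬ BlockingStudent R prio q (GS (Function.update R i (truncate (R i) n)) prio q) i) :
    ¬ prefLt (R i) (GS R prio q i) (GS (Function.update R i (truncate (R i) n)) prio q i) := by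
  intro hlt
  have hT := validPref_update hR (validPref_truncate (hR i) n) (i := i)
  have hμT := isStable_gs (q := q) hT hprio
  have hμ := hμT.of_update_truncate (hR i) hnb
  have hν : GS R prio q i ≠ none := fun h => hμ.1 i (h ▸ hlt)
  by_cases hμi : GS (Function.update R i (truncate (R i) n)) prio q i = none
  · exact hμ.ne_none_of_forall_not_prefLt hR (gs_isMatching hR hprio)
      (not_prefLt_gs_of_isStable hR hprio (gs_isMatching hT hprio) hμ) hν hμi
  have hμlt := (hR i).idxOf_lt_of_truncate (by simpa using hμT.1 i) hμi
  unfold prefLt at hlt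
  have hνT := (isStable_gs hR hprio).update_truncate (hR i) hν (n := n) (by omega)
  apply not_prefLt_gs_of_isStable hT hprio (gs_isMatching hR hprio) hνT i
  have h1 := (hR i).min_idxOf_truncate n (GS R prio q i)
  have h2 := (hR i).min_idxOf_truncate n (GS (Function.update R i (truncate (R i) n)) prio q i)
  unfold prefLt
  rw [Function.update_self]
  omega

end Strategyproofness

theorem manipulating_student_blocks_gsk_general
    {I S : Type*} [Fintype I] [DecidableEq I] [Fintype S] [DecidableEq S]
    (P : I → List (Option S)) (prio : S → List I) (q : S → ℕ)
    (hP : ∀ i, ValidPref (P i)) (hprio : ∀ s, ValidPrio (prio s))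
    (k : ℕ) (i : I)
    (hm : ManipulatingStudent (fun R => GSk k R prio q) P i) :
    BlockingStudent P prio q (GSk k P prio q) i := by
  obtain ⟨Q, hQ, hlt⟩ := hm
  by_contra hnb
  set T : I → List (Option S) := fun j => truncate (P j) k
  set V := Function.update T i (P i)
  have hVi : V i = P i := Function.update_self ..
  have hVT : Function.update V i (truncate (V i) k) = T := by
    rw [hVi, Function.update_idem, Function.update_eq_self_iff]
  have hVQ : Function.update V i (truncate Q k) =
      fun j => truncate (Function.update P i Q j) k := by
    rw [Function.update_idem]
    funext j
    by_cases hj : j = i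
    · subst hj; simp
    · simp [hj, T]
  have hV : ∀ j, ValidPref (V j) := validPref_update (fun j => validPref_truncate (hP j) k) (hP i)
  have hSP := not_prefLt_gs_update hV hprio (i := i) (q := q) (validPref_truncate hQ k)
  have hopt := not_prefLt_gs_of_not_blockingStudent_gs_update_truncate hV hprio (i := i)
    (q := q) (n := k) (by rw [hVT]; exact fun ⟨s, hs⟩ => hnb ⟨s, by rwa [Blocks, hVi] at hs⟩)
  rw [hVT, hVi] at hopt
  rw [hVQ, hVi] at hSP
  change prefLt (P i) (GS (fun j => truncate (Function.update P i Q j) k) prio q i)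
    (GS T prio q i) at hlt
  unfold prefLt at hSP hopt hlt
  omega

/-- Theorem 5(ii): for `k > 1`, every manipulating student of
`GS^k` at `(P,≻,q)` is a blocking student for `GS^k(P,≻,q)` under `(P,≻,q)`. -/
theorem manipulating_student_blocks_gsk
    {I S : Type*} [Fintype I] [DecidableEq I] [Fintype S] [DecidableEq S]
    (hIS : Fintype.card S < Fintype.card I)
    (P : I → List (Option S)) (prio : S → List I) (q : S → ℕ)
    (hP : ∀ i, ValidPref (P i)) (hprio : ∀ s, ValidPrio (prio s))
    (k : ℕ) (hk : 1 < k) (i : I)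
    (hm : ManipulatingStudent (fun R => GSk k R prio q) P i) :
    BlockingStudent P prio q (GSk k P prio q) i :=
  manipulating_student_blocks_gsk_general P prio q hP hprio k i hm

end SchoolChoice
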